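/- arXiv:quant-ph/0701069 — 4 statements merged into one kernel-verified Lean document; each statement's English description precedes it below -/
import Mathlib

section
/- For nonnegative reals x₁, x₂, x₃ with x₁x₂x₃ ≥ z ≥ 0, the function F(x₁,x₂,x₃) = √((x₁+1)(x₂+1)(x₃+1) − z) − √(x₁x₂x₃ − z) satisfies F(x₁,x₂,x₃) ≥ 1. -/
theorem stmt_0 (x₁ x₂ x₃ z : ℝ) (h₁ : 0 ≤ x₁) (h₂ : 0 ≤ x₂) (h₃ : 0 ≤ x₃)
    (hz : 0 ≤ z) (hzx : z ≤ x₁ * x₂ * x₃) :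
    1 ≤ Real.sqrt ((x₁ + 1) * (x₂ + 1) * (x₃ + 1) - z) - Real.sqrt (x₁ * x₂ * x₃ - z) := by
  set B := x₁ * x₂ * x₃ - z with hB
  have hB0 : 0 ≤ B := by linarith
  have hsB : Real.sqrt B ^ 2 = B := Real.sq_sqrt hB0
  have hsBnn : 0 ≤ Real.sqrt B := Real.sqrt_nonneg _
  have key : Real.sqrt B + 1 ≤ Real.sqrt ((x₁ + 1) * (x₂ + 1) * (x₃ + 1) - z) := by
    rw [show Real.sqrt B + 1 = Real.sqrt ((Real.sqrt B + 1) ^ 2) from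
      (Real.sqrt_sq (by positivity)).symm]
    apply Real.sqrt_le_sqrt
    -- need (√B + 1)^2 ≤ (x₁+1)(x₂+1)(x₃+1) - z
    have h2 : 2 * Real.sqrt B ≤ x₁ * x₂ + x₃ := by
      have hle : Real.sqrt B ≤ Real.sqrt (x₁ * x₂ * x₃) :=
        Real.sqrt_le_sqrt (by linarith)
      have heq : Real.sqrt (x₁ * x₂ * x₃) = Real.sqrt (x₁ * x₂) * Real.sqrt x₃ :=
        Real.sqrt_mul (by positivity) _
      have hu := Real.sq_sqrt (mul_nonneg h₁ h₂)
      have hv := Real.sq_sqrt h₃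
      nlinarith [sq_nonneg (Real.sqrt (x₁ * x₂) - Real.sqrt x₃), Real.sqrt_nonneg (x₁*x₂), Real.sqrt_nonneg x₃]
    nlinarith [mul_nonneg h₁ h₂, mul_nonneg h₂ h₃, mul_nonneg h₁ h₃]
  linarith
end

section
/- For a nonnegative real x and real z with 0 ≤ z ≤ x³, one has √((x+1)³ − z) − √(x³ − z) ≥ 1. -/
theorem stmt_2 (x z : ℝ) (hx : 0 ≤ x) (hz : 0 ≤ z) (hzx : z ≤ x ^ 3) :
    1 ≤ Real.sqrt ((x + 1) ^ 3 - z) - Real.sqrt (x ^ 3 - z) := by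
  set s := Real.sqrt (x ^ 3 - z) with hsdef
  have hs0 : 0 ≤ s := Real.sqrt_nonneg _
  have hs2 : s ^ 2 = x ^ 3 - z := Real.sq_sqrt (by linarith)
  have hsle : s ≤ (x ^ 2 + x) / 2 := by
    rw [hsdef]
    have h1 : x ^ 3 - z ≤ ((x ^ 2 + x) / 2) ^ 2 := by nlinarith [sq_nonneg (x^2 - x)]
    calc Real.sqrt (x ^ 3 - z) ≤ Real.sqrt (((x ^ 2 + x) / 2) ^ 2) := Real.sqrt_le_sqrt h1
      _ = (x ^ 2 + x) / 2 := Real.sqrt_sq (by positivity)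
  have key : 1 + s ≤ Real.sqrt ((x + 1) ^ 3 - z) := by
    rw [show (1 : ℝ) + s = Real.sqrt ((1 + s) ^ 2) from (Real.sqrt_sq (by linarith)).symm]
    apply Real.sqrt_le_sqrt
    nlinarith
  linarith
end

section
/- For nonnegative reals x₁, x₂ and z with 0 ≤ z ≤ x₁x₂, one has √((x₁+1)(x₂+1) − z) − √(x₁x₂ − z) ≥ 1. -/
theorem stmt_3 (x₁ x₂ z : ℝ) (h₁ : 0 ≤ x₁) (h₂ : 0 ≤ x₂) (hz : 0 ≤ z)
    (hzx : z ≤ x₁ * x₂) :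
    1 ≤ Real.sqrt ((x₁ + 1) * (x₂ + 1) - z) - Real.sqrt (x₁ * x₂ - z) := by
  have ha : 0 ≤ x₁ * x₂ - z := by linarith
  have hs : Real.sqrt (x₁ * x₂ - z) ^ 2 = x₁ * x₂ - z := Real.sq_sqrt ha
  have h2 : Real.sqrt (x₁ * x₂ - z) ≤ (x₁ + x₂) / 2 := by
    rw [show (x₁ + x₂) / 2 = Real.sqrt (((x₁ + x₂) / 2) ^ 2) by
      rw [Real.sqrt_sq (by positivity)]]
    apply Real.sqrt_le_sqrt
    nlinarith [sq_nonneg (x₁ - x₂)]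
  have key : Real.sqrt (x₁ * x₂ - z) + 1 ≤ Real.sqrt ((x₁ + 1) * (x₂ + 1) - z) := by
    rw [show Real.sqrt ((x₁ + 1) * (x₂ + 1) - z)
        = Real.sqrt ((Real.sqrt (x₁ * x₂ - z) + 1) ^ 2
          + (x₁ + x₂ - 2 * Real.sqrt (x₁ * x₂ - z))) by
      congr 1; nlinarith]
    nth_rewrite 1 [show Real.sqrt (x₁ * x₂ - z) + 1
        = Real.sqrt ((Real.sqrt (x₁ * x₂ - z) + 1) ^ 2) by
      rw [Real.sqrt_sq (by positivity)]]
    apply Real.sqrt_le_sqrt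
    linarith
  linarith
end

section
/- For nonnegative reals x₁, x₂, x₃, x₄, z with x₂ ≥ x₃ + x₄ (interpreting x₂ = ⟨N_b N_c⟩ ≥ 0 arbitrary) and 0 ≤ z ≤ x₁x₂, the quantity √((x₁+1)(x₂+x₃+x₄+1) − z) − √(x₁x₂ − z) is at least √((x₁+1)(x₂+1) − z) − √(x₁x₂ − z), and hence at least 1. -/
theorem stmt_4 (x₁ x₂ x₃ x₄ z : ℝ) (h₁ : 0 ≤ x₁) (h₂ : 0 ≤ x₂) (h₃ : 0 ≤ x₃)
    (h₄ : 0 ≤ x₄) (hz : 0 ≤ z) (hzx : z ≤ x₁ * x₂) :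
    Real.sqrt ((x₁ + 1) * (x₂ + 1) - z) - Real.sqrt (x₁ * x₂ - z) ≤
      Real.sqrt ((x₁ + 1) * (x₂ + x₃ + x₄ + 1) - z) - Real.sqrt (x₁ * x₂ - z) ∧
    1 ≤ Real.sqrt ((x₁ + 1) * (x₂ + x₃ + x₄ + 1) - z) - Real.sqrt (x₁ * x₂ - z) := by
  have ha : 0 ≤ x₁ * x₂ - z := by linarith
  have hsa : Real.sqrt (x₁ * x₂ - z) ≤ (x₁ + x₂) / 2 := by
    have h1 : Real.sqrt (x₁ * x₂ - z) ≤ Real.sqrt (x₁ * x₂) :=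
      Real.sqrt_le_sqrt (by linarith)
    have h2 : Real.sqrt (x₁ * x₂) ≤ (x₁ + x₂) / 2 := by
      rw [show (x₁ + x₂)/2 = Real.sqrt (((x₁+x₂)/2)^2) from
        (Real.sqrt_sq (by linarith)).symm]
      exact Real.sqrt_le_sqrt (by nlinarith [sq_nonneg (x₁ - x₂)])
    linarith
  have key : 1 ≤ Real.sqrt ((x₁ + 1) * (x₂ + 1) - z) - Real.sqrt (x₁ * x₂ - z) := by
    have h1 : (1 + Real.sqrt (x₁ * x₂ - z))^2 ≤ (x₁ + 1) * (x₂ + 1) - z := by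
      have := Real.sq_sqrt ha
      nlinarith [Real.sqrt_nonneg (x₁ * x₂ - z)]
    have h2 : 1 + Real.sqrt (x₁ * x₂ - z) ≤ Real.sqrt ((x₁ + 1) * (x₂ + 1) - z) := by
      rw [show (1 + Real.sqrt (x₁*x₂-z)) = Real.sqrt ((1 + Real.sqrt (x₁*x₂-z))^2) from
        (Real.sqrt_sq (by positivity)).symm]
      exact Real.sqrt_le_sqrt h1
    linarith
  have mono : Real.sqrt ((x₁ + 1) * (x₂ + 1) - z) ≤
      Real.sqrt ((x₁ + 1) * (x₂ + x₃ + x₄ + 1) - z) :=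
    Real.sqrt_le_sqrt (by nlinarith)
  exact ⟨by linarith, by linarith⟩
end
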